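/- Sign characterization in Dinkelbach's method: with R, P : S → ℝ, P > 0, S nonempty and the supremum attained, let η* = max_{x∈S} R(x)/P(x). Then G(η) > 0 for η < η*, G(η*) = 0, and G(η) < 0 for η > η*, where G(η) = max_{x∈S}(R(x) − η P(x)). -/

import Mathlib

/-! The parametric objective `η ↦ R x - η * P x` is strictly decreasing in `η` for each `x`, since
`P x > 0`, and at `η* = R x* / P x*` it is nonpositive everywhere and vanishes at `x*`. Hence the
maximum `G(η*)` is `0`; below `η*` the point `x*` alone makes `G` positive, and above `η*` every
point, in particular the maximizer, gives a negative value. -/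

lemma sub_mul_nonpos_of_div_le {r p e : ℝ} (hp : 0 < p) (h : r / p ≤ e) : r - e * p ≤ 0 :=
  sub_nonpos.mpr ((div_le_iff₀ hp).mp h)

lemma sub_div_mul_self_eq_zero (r : ℝ) {p : ℝ} (hp : p ≠ 0) : r - r / p * p = 0 := by
  rw [div_mul_cancel₀ r hp, sub_self]

lemma sub_mul_lt_sub_mul_of_lt (r : ℝ) {p η η' : ℝ} (hp : 0 < p) (h : η < η') :
    r - η' * p < r - η * p :=
  sub_lt_sub_left (mul_lt_mul_of_pos_right h hp) r

theorem dinkelbach_sign_characterization_general {S : Type*}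
    (R P : S → ℝ) (hP : ∀ x, 0 < P x)
    (xstar : S) (hmax : ∀ x, R x / P x ≤ R xstar / P xstar)
    (M : ℝ → S) (hM : ∀ η x, R x - η * P x ≤ R (M η) - η * P (M η)) :
    (∀ η, η < R xstar / P xstar → 0 < R (M η) - η * P (M η)) ∧
      (R (M (R xstar / P xstar)) - (R xstar / P xstar) * P (M (R xstar / P xstar)) = 0) ∧
      (∀ η, R xstar / P xstar < η → R (M η) - η * P (M η) < 0) := by
  set e := R xstar / P xstar
  have hopt_nonpos : ∀ x, R x - e * P x ≤ 0 := fun x => sub_mul_nonpos_of_div_le (hP x) (hmax x)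
  have hopt_star : R xstar - e * P xstar = 0 := sub_div_mul_self_eq_zero _ (hP xstar).ne'
  refine ⟨fun η hη => ?_, ?_, fun η hη => ?_⟩
  · calc 0 = R xstar - e * P xstar := hopt_star.symm
      _ < R xstar - η * P xstar := sub_mul_lt_sub_mul_of_lt _ (hP xstar) hη
      _ ≤ R (M η) - η * P (M η) := hM η xstar
  · exact le_antisymm (hopt_nonpos (M e)) (hopt_star ▸ hM e xstar)
  · calc R (M η) - η * P (M η) < R (M η) - e * P (M η) := sub_mul_lt_sub_mul_of_lt _ (hP _) hη
      _ ≤ 0 := hopt_nonpos (M η)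

/-- Sign characterization in Dinkelbach's method: `G(η) > 0` for `η < η*`,
`G(η*) = 0`, `G(η) < 0` for `η > η*`, where maxima are attained via `M`. -/
theorem dinkelbach_sign_characterization {S : Type*} [Nonempty S]
    (R P : S → ℝ) (hP : ∀ x, 0 < P x)
    (xstar : S) (hmax : ∀ x, R x / P x ≤ R xstar / P xstar)
    (M : ℝ → S) (hM : ∀ η x, R x - η * P x ≤ R (M η) - η * P (M η)) :
    (∀ η, η < R xstar / P xstar → 0 < R (M η) - η * P (M η)) ∧
      (R (M (R xstar / P xstar)) - (R xstar / P xstar) * P (M (R xstar / P xstar)) = 0) ∧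
      (∀ η, R xstar / P xstar < η → R (M η) - η * P (M η) < 0) :=
  dinkelbach_sign_characterization_general R P hP xstar hmax M hM
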